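/- arXiv:1506.05897 — 3 statements merged into one kernel-verified Lean document; each statement's English description precedes it below -/
import Mathlib

section
/- Let m ≥ 1 and 0 ≤ r ≤ m−1 be integers and let n > (m−r)². In the polynomial ring ℤ[X, Y, Z], the coefficient of the monomial X^n · Y^{r(m−r)} · Z^{m(m−r)−1} in the expansion of (X+Y)^{m(m−r)} · (Y+Z)^{n−1} · (X+Z)^{r(m−r)} equals δ(m,n,r). -/
/-!
Expanding the three binomials, the monomial `X^i Y^(a-i) · Y^j Z^(b-j) · X^k Z^(c-k)` is
`X^n Y^c Z^(a-1)` (with `a = m(m-r)`, `b = n-1`, `c = r(m-r)`, `s = (m-r)² = a - c`) exactly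
when `i = n - k` and `j = n - k - s`. So every `k` with `n - a ≤ k ≤ min(n - s, c)` contributes
`C(a, n-k) C(n-1, n-k-s) C(c, k)` and nothing else contributes; the symmetry
`C(n-1, n-k-s) = C(n-1, k+s-1)` turns this into `δ(m,n,r)`.
-/

/-- `δ(m,n,r) = Σ_{k ∈ F_{m,n,r}} C(m(m−r), n−k)·C(n−1, k+(m−r)²−1)·C(r(m−r), k)`,
where `F_{m,n,r} = {k : max(0, n−m(m−r)) ≤ k ≤ min(n−(m−r)², r(m−r))}`. -/
def deltaMNR (m n r : ℕ) : ℕ :=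
  ∑ k ∈ Finset.Icc (max 0 (n - m * (m - r))) (min (n - (m - r) ^ 2) (r * (m - r))),
    (m * (m - r)).choose (n - k) * (n - 1).choose (k + (m - r) ^ 2 - 1) * (r * (m - r)).choose k

open Finset MvPolynomial

theorem MvPolynomial.X_add_X_pow {σ R : Type*} [CommSemiring R] (x y : σ) (a : ℕ) :
    (X x + X y : MvPolynomial σ R) ^ a =
      ∑ i ∈ range (a + 1),
        monomial (Finsupp.single x i + Finsupp.single y (a - i)) (a.choose i : R) := by
  rw [add_pow]
  refine sum_congr rfl fun i _ => ?_
  rw [X_pow_eq_monomial, X_pow_eq_monomial, monomial_mul, ← C_eq_coe_nat, mul_comm,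
    C_mul_monomial, mul_one, mul_one]

theorem MvPolynomial.coeff_X_add_X_pow_mul_X_add_X_pow_mul_X_add_X_pow {σ R : Type*}
    [CommSemiring R] [DecidableEq σ] (x y z : σ) (a b c : ℕ) (d : σ →₀ ℕ) :
    coeff d ((X x + X y) ^ a * (X y + X z) ^ b * (X x + X z) ^ c : MvPolynomial σ R) =
      ∑ k ∈ range (c + 1), ∑ j ∈ range (b + 1), ∑ i ∈ range (a + 1),
        if Finsupp.single x (i + k) + Finsupp.single y (a - i + j) +
            Finsupp.single z (b - j + (c - k)) = d
        then (a.choose i * b.choose j * c.choose k : R) else 0 := by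
  simp only [X_add_X_pow, sum_mul, mul_sum, coeff_sum, monomial_mul, coeff_monomial]
  refine sum_congr rfl fun k _ => sum_congr rfl fun j _ => sum_congr rfl fun i _ => ?_
  congr 2
  ext v
  simp only [Finsupp.add_apply, Finsupp.single_apply]
  split_ifs <;> omega

theorem Finsupp.single_add_single_add_single_fin_three_eq_iff {x y z x' y' z' : ℕ} :
    (single 0 x + single 1 y + single 2 z : Fin 3 →₀ ℕ) =
        single 0 x' + single 1 y' + single 2 z' ↔ x = x' ∧ y = y' ∧ z = z' := by
  simp [Finsupp.ext_iff, Fin.forall_fin_succ, single_apply]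

section Exponents

variable {a c s n : ℕ}

theorem sum_sum_ite_exponents_eq (hs : 1 ≤ s) (hac : a = c + s) {k : ℕ} (hk : k ≤ c) :
    (∑ j ∈ range (n - 1 + 1), ∑ i ∈ range (a + 1),
      if (Finsupp.single 0 (i + k) + Finsupp.single 1 (a - i + j) +
          Finsupp.single 2 (n - 1 - j + (c - k)) : Fin 3 →₀ ℕ) =
        Finsupp.single 0 n + Finsupp.single 1 c + Finsupp.single 2 (a - 1)
      then (a.choose i * (n - 1).choose j * c.choose k : ℤ) else 0) =
    if k + s ≤ n ∧ n ≤ a + k then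
      (a.choose (n - k) * (n - 1).choose (n - k - s) * c.choose k : ℤ) else 0 := by
  have exponents_eq_iff : ∀ j ∈ range (n - 1 + 1), ∀ i ∈ range (a + 1),
      (Finsupp.single 0 (i + k) + Finsupp.single 1 (a - i + j) +
          Finsupp.single 2 (n - 1 - j + (c - k)) : Fin 3 →₀ ℕ) =
        Finsupp.single 0 n + Finsupp.single 1 c + Finsupp.single 2 (a - 1) ↔
      (i = n - k ∧ j = n - k - s) ∧ k + s ≤ n ∧ n ≤ a + k := by
    intro j hj i hi
    rw [mem_range] at hi hj
    rw [Finsupp.single_add_single_add_single_fin_three_eq_iff]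
    omega
  rw [sum_congr rfl fun j hj => sum_congr rfl fun i hi =>
    if_congr (exponents_eq_iff j hj i hi) rfl rfl]
  simp only [ite_and, sum_ite_eq', sum_ite_irrel, sum_const_zero, mem_range]
  split_ifs <;> first | rfl | omega

theorem coeff_X_add_X_pow_mul_X_add_X_pow_mul_X_add_X_pow_eq_sum_Icc (hs : 1 ≤ s) (hsn : s ≤ n)
    (hac : a = c + s) :
    coeff (Finsupp.single 0 n + Finsupp.single 1 c + Finsupp.single 2 (a - 1))
      ((X 0 + X 1) ^ a * (X 1 + X 2) ^ (n - 1) * (X 0 + X 2) ^ c : MvPolynomial (Fin 3) ℤ) =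
      ∑ k ∈ Icc (n - a) (min (n - s) c),
        (a.choose (n - k) * (n - 1).choose (k + s - 1) * c.choose k : ℤ) := by
  rw [coeff_X_add_X_pow_mul_X_add_X_pow_mul_X_add_X_pow,
    sum_congr rfl fun k hk => sum_sum_ite_exponents_eq hs hac (mem_range_succ_iff.mp hk),
    ← sum_filter]
  refine sum_congr (by ext k; simp only [mem_filter, mem_range, mem_Icc]; omega) fun k hk => ?_
  rw [mem_Icc] at hk
  rw [Nat.choose_symm_of_eq_add (by omega : n - 1 = (n - k - s) + (k + s - 1))]

end Exponents

theorem stmt_2 (m r n : ℕ) (hm : 1 ≤ m) (hrm : r ≤ m - 1) (hn : (m - r) ^ 2 < n) :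
    MvPolynomial.coeff
      (Finsupp.single (0 : Fin 3) n + Finsupp.single 1 (r * (m - r)) +
        Finsupp.single 2 (m * (m - r) - 1))
      ((MvPolynomial.X 0 + MvPolynomial.X 1) ^ (m * (m - r)) *
        (MvPolynomial.X 1 + MvPolynomial.X 2) ^ (n - 1) *
        (MvPolynomial.X 0 + MvPolynomial.X 2) ^ (r * (m - r)) : MvPolynomial (Fin 3) ℤ) =
      (deltaMNR m n r : ℤ) := by
  have hs : 1 ≤ (m - r) ^ 2 := Nat.one_le_pow _ _ (by omega)
  have hac : m * (m - r) = r * (m - r) + (m - r) ^ 2 := by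
    rw [sq, ← add_mul, Nat.add_sub_cancel' (by omega)]
  rw [coeff_X_add_X_pow_mul_X_add_X_pow_mul_X_add_X_pow_eq_sum_Icc hs hn.le hac, deltaMNR,
    Nat.zero_max]
  push_cast
  rfl
end

section
/- Let m ≥ 1, 1 ≤ r ≤ m−1 and n > (m−r)² be integers. Define Σ_B = Σ_{k=0}^{r(m−r)} C(m(m−r)−1, n−k)·C(n−1, k−1+(m−r)²)·C(r(m−r), k). Then Σ_B ≤ δ(m,n,r). -/
/-!
Outside `F_{m,n,r}` one of the binomial factors of the summand of `δ(m,n,r)` vanishes, so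
`δ(m,n,r)` is the same sum taken over `0 ≤ k ≤ r(m−r)`. Termwise comparison then only needs
`C(N−1, j) ≤ C(N, j)`.
-/

open Finset

theorem choose_mul_choose_eq_zero_of_notMem_Icc {a b n k : ℕ} (hn : 0 < n)
    (hk : k ∉ Icc (n - a) (n - b)) :
    a.choose (n - k) * (n - 1).choose (k + b - 1) = 0 := by
  rw [mem_Icc, not_and_or, not_le, not_le] at hk
  rcases hk with hk | hk
  · rw [Nat.choose_eq_zero_of_lt (by omega : a < n - k), zero_mul]
  · rw [Nat.choose_eq_zero_of_lt (by omega : n - 1 < k + b - 1), mul_zero]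

theorem sum_Icc_choose_mul_choose_eq_sum_range {a b c n : ℕ} (hn : 0 < n) (g : ℕ → ℕ) :
    ∑ k ∈ Icc (n - a) (min (n - b) c), a.choose (n - k) * (n - 1).choose (k + b - 1) * g k =
      ∑ k ∈ range (c + 1), a.choose (n - k) * (n - 1).choose (k + b - 1) * g k := by
  refine sum_subset (fun k hk => ?_) fun k _ hk => ?_
  · simp only [mem_Icc, mem_range] at hk ⊢
    omega
  · have hk' : k ∉ Icc (n - a) (n - b) := by
      simp_all only [mem_Icc, mem_range, le_min_iff, not_and, not_le]
      omega
    rw [choose_mul_choose_eq_zero_of_notMem_Icc hn hk', zero_mul]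

theorem deltaMNR_eq_sum_range {m n r : ℕ} (hn : 0 < n) :
    deltaMNR m n r = ∑ k ∈ range (r * (m - r) + 1),
      (m * (m - r)).choose (n - k) * (n - 1).choose (k + (m - r) ^ 2 - 1) *
        (r * (m - r)).choose k := by
  rw [deltaMNR, zero_max, sum_Icc_choose_mul_choose_eq_sum_range hn]

theorem stmt_4_general (m n r : ℕ)
    (hn : (m - r) ^ 2 < n) :
    (∑ k ∈ Finset.range (r * (m - r) + 1),
        (m * (m - r) - 1).choose (n - k) * (n - 1).choose (k + (m - r) ^ 2 - 1) *
          (r * (m - r)).choose k) ≤ deltaMNR m n r := by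
  rw [deltaMNR_eq_sum_range (by omega)]
  gcongr
  exact Nat.sub_le _ _

theorem stmt_4 (m n r : ℕ) (hm : 1 ≤ m) (hr : 1 ≤ r) (hrm : r ≤ m - 1)
    (hn : (m - r) ^ 2 < n) :
    (∑ k ∈ Finset.range (r * (m - r) + 1),
        (m * (m - r) - 1).choose (n - k) * (n - 1).choose (k + (m - r) ^ 2 - 1) *
          (r * (m - r)).choose k) ≤ deltaMNR m n r :=
  stmt_4_general m n r hn
end

section
/- For (x₁, x₂, x₃) ∈ ℝ³, the real symmetric matrix A(x) = [[1, x₁, 0, x₁], [x₁, 1, x₂, 0], [0, x₂, 1, x₃], [x₁, 0, x₃, 1]] has rank at most 2 if and only if 2x₁² = 1, 2x₃² = 1 and x₂ = −x₃. In particular, the set of real points where rank A(x) ≤ 2 consists of exactly four points. -/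
/-!
If `rank A(x) ≤ 2`, every `3 × 3` minor vanishes; the minors on rows and columns `{0,1,2}`,
`{0,2,3}`, and rows `{0,2,3}` against columns `{0,2,1}` give `x₁² + x₂² = 1`, `x₁² + x₃² = 1`
and `x₁² = -x₂x₃`. Hence `x₂² = x₃²`, and `x₂ = x₃` is impossible, so `x₂ = -x₃` and
`x₁² = x₃² = 1/2`. Conversely, at these points `A(x)` factors through `ℝ²`.
-/

/-- The linear matrix of the "pillow" spectrahedron. -/
def pillowMat (x₁ x₂ x₃ : ℝ) : Matrix (Fin 4) (Fin 4) ℝ :=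
  !![1, x₁, 0, x₁; x₁, 1, x₂, 0; 0, x₂, 1, x₃; x₁, 0, x₃, 1]

theorem Matrix.det_submatrix_eq_zero_of_rank_lt {K m n ι : Type*} [Field K] [Fintype n]
    [Fintype ι] [DecidableEq ι] (A : Matrix m n K) (r : ι → m) (c : ι → n)
    (h : A.rank < Fintype.card ι) : (A.submatrix r c).det = 0 := by
  by_contra hdet
  have hunit : IsUnit (A.submatrix r c) :=
    (Matrix.isUnit_iff_isUnit_det _).mpr (isUnit_iff_ne_zero.mpr hdet)
  have hle := A.rank_submatrix_le r c
  rw [Matrix.rank_of_isUnit _ hunit] at hle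
  exact hle.not_gt h

theorem Real.ncard_setOf_sq_eq {c : ℝ} (hc : 0 < c) : {a : ℝ | a ^ 2 = c}.ncard = 2 := by
  have hset : {a : ℝ | a ^ 2 = c} = {√c, -√c} := by
    ext a
    simp only [Set.mem_ofPred_eq, Set.mem_insert_iff, Set.mem_singleton_iff]
    rw [← sq_eq_sq_iff_eq_or_eq_neg, Real.sq_sqrt hc.le]
  rw [hset, Set.ncard_pair (by linarith [Real.sqrt_pos.mpr hc])]

theorem pillowMat_minor_relations_of_rank_le_two {x₁ x₂ x₃ : ℝ}
    (h : (pillowMat x₁ x₂ x₃).rank ≤ 2) :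
    x₁ ^ 2 + x₂ ^ 2 = 1 ∧ x₁ ^ 2 + x₃ ^ 2 = 1 ∧ x₁ ^ 2 = -(x₂ * x₃) := by
  have minor (r c : Fin 3 → Fin 4) := (pillowMat x₁ x₂ x₃).det_submatrix_eq_zero_of_rank_lt r c
    (by simp only [Fintype.card_fin]; omega)
  have e₁ := minor ![0, 1, 2] ![0, 1, 2]
  have e₂ := minor ![0, 2, 3] ![0, 2, 3]
  have e₃ := minor ![0, 2, 3] ![0, 2, 1]
  rw [Matrix.det_fin_three] at e₁ e₂ e₃
  simp only [pillowMat, Fin.isValue, Matrix.submatrix_apply, Matrix.cons_val_zero,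
    Matrix.of_apply, Matrix.cons_val', Matrix.cons_val_fin_one, Matrix.cons_val_one, mul_one,
    Matrix.cons_val, one_mul, mul_zero, add_zero, zero_mul, sub_zero, zero_sub] at e₁ e₂ e₃
  exact ⟨by linarith, by linarith, by linarith⟩

theorem pillowMat_coords_of_rank_le_two {x₁ x₂ x₃ : ℝ} (h : (pillowMat x₁ x₂ x₃).rank ≤ 2) :
    2 * x₁ ^ 2 = 1 ∧ 2 * x₃ ^ 2 = 1 ∧ x₂ = -x₃ := by
  obtain ⟨h₁₂, h₁₃, h₂₃⟩ := pillowMat_minor_relations_of_rank_le_two h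
  have hx₂ : x₂ = -x₃ := by
    rcases sq_eq_sq_iff_eq_or_eq_neg.mp (show x₂ ^ 2 = x₃ ^ 2 by linarith) with rfl | h
    · nlinarith [sq_nonneg x₁, sq_nonneg x₂]
    · exact h
  subst hx₂
  exact ⟨by nlinarith, by nlinarith, rfl⟩

theorem pillowMat_neg_rank_le_two {x₁ x₃ : ℝ} (h₁ : 2 * x₁ ^ 2 = 1) (h₃ : 2 * x₃ ^ 2 = 1) :
    (pillowMat x₁ (-x₃) x₃).rank ≤ 2 := by
  have hfactor : pillowMat x₁ (-x₃) x₃ =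
      !![1, 0; x₁, -x₃; 0, 1; x₁, x₃] * !![1, x₁, 0, x₁; 0, -x₃, 1, x₃] := by
    ext i j
    fin_cases i <;> fin_cases j <;>
      simp [pillowMat, Matrix.mul_apply, Fin.sum_univ_two] <;> linarith
  rw [hfactor]
  calc _ ≤ _ := Matrix.rank_mul_le_left _ _
    _ ≤ Fintype.card (Fin 2) := Matrix.rank_le_card_width _
    _ = 2 := Fintype.card_fin 2

theorem pillowMat_rank_le_two_iff {x₁ x₂ x₃ : ℝ} :
    (pillowMat x₁ x₂ x₃).rank ≤ 2 ↔ 2 * x₁ ^ 2 = 1 ∧ 2 * x₃ ^ 2 = 1 ∧ x₂ = -x₃ :=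
  ⟨pillowMat_coords_of_rank_le_two, fun ⟨h₁, h₃, h₂⟩ => h₂ ▸ pillowMat_neg_rank_le_two h₁ h₃⟩

theorem setOf_pillowMat_rank_le_two_eq_image :
    {p : ℝ × ℝ × ℝ | (pillowMat p.1 p.2.1 p.2.2).rank ≤ 2} =
      (fun q : ℝ × ℝ => (q.1, -q.2, q.2)) ''
        ({a : ℝ | a ^ 2 = 1 / 2} ×ˢ {a : ℝ | a ^ 2 = 1 / 2}) := by
  ext ⟨a, b, c⟩
  simp only [Set.mem_ofPred_eq, pillowMat_rank_le_two_iff, Set.mem_image, Set.mem_prod,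
    Prod.exists, Prod.mk.injEq]
  constructor
  · rintro ⟨ha, hc, rfl⟩
    exact ⟨a, c, ⟨by linarith, by linarith⟩, rfl, rfl, rfl⟩
  · rintro ⟨a, c, ⟨ha, hc⟩, rfl, rfl, rfl⟩
    exact ⟨by linarith, by linarith, rfl⟩

theorem stmt_15 :
    (∀ x₁ x₂ x₃ : ℝ,
      (pillowMat x₁ x₂ x₃).rank ≤ 2 ↔ (2 * x₁ ^ 2 = 1 ∧ 2 * x₃ ^ 2 = 1 ∧ x₂ = -x₃)) ∧
    {p : ℝ × ℝ × ℝ | (pillowMat p.1 p.2.1 p.2.2).rank ≤ 2}.ncard = 4 := by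
  refine ⟨fun _ _ _ => pillowMat_rank_le_two_iff, ?_⟩
  have hembed : Function.Injective fun q : ℝ × ℝ => (q.1, -q.2, q.2) := by
    rintro ⟨a, c⟩ ⟨a', c'⟩ hq
    simp_all only [Prod.mk.injEq]
  rw [setOf_pillowMat_rank_le_two_eq_image, Set.ncard_image_of_injective _ hembed,
    Set.ncard_prod, Real.ncard_setOf_sq_eq (by norm_num)]
end
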